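/- If G is a finite connected graph with n(G) ≥ 2 vertices and H is a finite graph with at least one vertex, then gp(G ∘ H) = n(G) · ρ(H). -/

import Mathlib

namespace SimpleGraph

variable {V : Type*}

/-- `S` is a general position set of `G`: no vertex of `S` lies on a geodesic
(shortest path) between two other vertices of `S`. -/
def IsGPSet (G : SimpleGraph V) (S : Set V) : Prop :=
  ∀ ⦃u v w : V⦄, u ∈ S → v ∈ S → w ∈ S → u ≠ v → u ≠ w → v ≠ w →
    ∀ p : G.Walk u v, p.IsPath → p.length = G.dist u v → w ∉ p.support

/-- The general position number of `G`: the maximum cardinality of a general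
position set of `G`. -/
noncomputable def gpNumber (G : SimpleGraph V) : ℕ :=
  sSup {n | ∃ S : Set V, G.IsGPSet S ∧ n = S.ncard}

/-- `ρ(G)`: the maximum number of vertices in a union of pairwise independent
complete subgraphs of `G`, where complete subgraphs `Q`, `Q'` are independent
if `d_G(u,u') ≥ 2` for every `u ∈ Q` and `u' ∈ Q'`. -/
noncomputable def rho (G : SimpleGraph V) : ℕ :=
  sSup {n | ∃ 𝒬 : Finset (Finset V),
    (∀ Q ∈ 𝒬, G.IsClique (Q : Set V)) ∧
    (∀ Q ∈ 𝒬, ∀ Q' ∈ 𝒬, Q ≠ Q' → ∀ u ∈ Q, ∀ u' ∈ Q', 2 ≤ G.edist u u') ∧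
    n = (⋃ Q ∈ 𝒬, (Q : Set V)).ncard}

/-- A graph is complete multipartite iff non-adjacency is transitive. -/
def IsCompleteMultipartite' (G : SimpleGraph V) : Prop := Transitive (¬G.Adj · ·)

/-- `η(G)`: the maximum order of an induced complete multipartite subgraph of
the complement of `G`. -/
noncomputable def eta (G : SimpleGraph V) : ℕ :=
  sSup {n | ∃ B : Set V, (Gᶜ.induce B).IsCompleteMultipartite' ∧ n = B.ncard}

/-- An independent set of a graph. -/
def IsIndepSet' (G : SimpleGraph V) (S : Set V) : Prop :=
  S.Pairwise fun u v => ¬ G.Adj u v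

/-- The independence number `α(G)`. -/
noncomputable def indepNum' (G : SimpleGraph V) : ℕ :=
  sSup {n | ∃ S : Set V, G.IsIndepSet' S ∧ n = S.ncard}

end SimpleGraph

/-- The Kneser graph `K(n,k)`: vertices are the `k`-element subsets of an
`n`-element set, two vertices adjacent iff the corresponding sets are disjoint. -/
def kneserGraph (n k : ℕ) : SimpleGraph {s : Finset (Fin n) // s.card = k} where
  Adj a b := Disjoint a.1 b.1 ∧ a ≠ b
  symm := by
    constructor
    rintro a b ⟨h1, h2⟩
    exact ⟨h1.symm, h2.symm⟩
  loopless := by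
    constructor
    rintro a ⟨-, h⟩
    exact h rfl

/-- The corona `G ∘ H`: the disjoint union of `G` and one copy of `H` for each
vertex `v` of `G` (the vertex `b` in the copy attached at `v` is `(v, b)`),
where each `v ∈ V(G)` is joined to every vertex of its own copy of `H`. -/
def corona {α β : Type*} (G : SimpleGraph α) (H : SimpleGraph β) :
    SimpleGraph (α ⊕ α × β) where
  Adj x y := match x, y with
    | Sum.inl a, Sum.inl a' => G.Adj a a'
    | Sum.inl a, Sum.inr p => a = p.1
    | Sum.inr p, Sum.inl a => p.1 = a
    | Sum.inr p, Sum.inr p' => p.1 = p'.1 ∧ H.Adj p.2 p'.2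
  symm := by
    constructor
    rintro (a | p) (a' | p') h <;> simp_all
    exacts [G.adj_symm h, H.adj_symm h.2]
  loopless := by
    constructor
    rintro (a | p) h <;> simp_all

/-!
In `G ∘ H`, two vertices of different copies `H_a`, `H_a'` are at distance `d_G(a, a') + 2`,
two vertices of one copy at distance `1` or `2`, and every geodesic leaving a copy `H_v` passes
through its root `v`. Hence a general position set containing `v` and a vertex of `H_v` lies in
`{v} ∪ H_v`; otherwise it meets each `{v} ∪ H_v` either in `{v}` or in a subset of `H_v` that
induces no `P₃`. A set inducing no `P₃` is a union of pairwise independent cliques, so each piece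
has at most `ρ(H)` vertices, and `gp ≤ n ρ` (the first case needs `n ≥ 2`). Conversely, the copies
in every `H_v` of an optimal union of independent cliques form a general position set.
-/

namespace SimpleGraph

variable {V W : Type*} {G : SimpleGraph V} {u v w : V}

lemma Walk.le_add_length_of_adj_le {Φ : V → ℕ} (hΦ : ∀ ⦃x y⦄, G.Adj x y → Φ x ≤ Φ y + 1)
    (p : G.Walk u v) : Φ u ≤ Φ v + p.length := by
  induction p with
  | nil => simp
  | cons h _ ih => rw [Walk.length_cons]; linarith [hΦ h]

lemma Reachable.le_add_dist_of_adj_le {Φ : V → ℕ} (hΦ : ∀ ⦃x y⦄, G.Adj x y → Φ x ≤ Φ y + 1)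
    (h : G.Reachable u v) : Φ u ≤ Φ v + G.dist u v := by
  obtain ⟨p, hp⟩ := h.exists_walk_length_eq_dist
  exact hp ▸ p.le_add_length_of_adj_le hΦ

lemma Reachable.dist_map_le {G' : SimpleGraph W} (f : G →g G') (h : G.Reachable u v) :
    G'.dist (f u) (f v) ≤ G.dist u v := by
  obtain ⟨p, hp⟩ := h.exists_walk_length_eq_dist
  simpa [hp] using dist_le (p.map f)

lemma Walk.dist_add_dist_le_length (p : G.Walk u v) (hw : w ∈ p.support) :
    G.dist u w + G.dist w v ≤ p.length := by
  classical
  rw [← p.take_spec hw, Walk.length_append]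
  exact add_le_add (dist_le _) (dist_le _)

lemma two_le_edist_iff : 2 ≤ G.edist u v ↔ u ≠ v ∧ ¬G.Adj u v := by
  rw [← not_iff_not, not_le, not_and_or, not_not, not_not, or_comm,
    ← edist_le_one_iff_adj_or_eq, ← one_add_one_eq_two, ENat.lt_add_one_iff ENat.one_ne_top]

lemma Connected.isGPSet_iff (hG : G.Connected) {S : Set V} :
    G.IsGPSet S ↔ ∀ ⦃u v w⦄, u ∈ S → v ∈ S → w ∈ S → u ≠ v → u ≠ w → v ≠ w →
      G.dist u v < G.dist u w + G.dist w v := by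
  refine ⟨fun hS u v w hu hv hw huv huw hvw => ?_,
    fun hS u v w hu hv hw huv huw hvw p _ hp hwp => ?_⟩
  · by_contra! hle
    obtain ⟨p, hp⟩ := hG.exists_walk_length_eq_dist u w
    obtain ⟨q, hq⟩ := hG.exists_walk_length_eq_dist w v
    have hlen : (p.append q).length = G.dist u v := by
      have := hG.dist_triangle (u := u) (v := w) (w := v)
      rw [Walk.length_append]
      omega
    exact hS hu hv hw huv huw hvw _ ((p.append q).isPath_of_length_eq_dist hlen) hlen
      ((p.mem_support_append_iff q).mpr (Or.inl p.end_mem_support))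
  · have := p.dist_add_dist_le_length hwp
    have := hS hu hv hw huv huw hvw
    omega

lemma gpNumber_le {N : ℕ} (h : ∀ S, G.IsGPSet S → S.ncard ≤ N) : G.gpNumber ≤ N :=
  csSup_le ⟨0, ∅, fun _ _ _ hu => absurd hu (Set.notMem_empty _), by simp⟩
    (by rintro _ ⟨S, hS, rfl⟩; exact h S hS)

lemma IsGPSet.ncard_le_gpNumber [Finite V] {S : Set V} (hS : G.IsGPSet S) :
    S.ncard ≤ G.gpNumber :=
  le_csSup ⟨Nat.card V, by rintro _ ⟨T, -, rfl⟩; exact Set.ncard_le_card T⟩ ⟨S, hS, rfl⟩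

/-- `G[T]` has no induced path on three vertices, i.e. it is a disjoint union of cliques
(a cluster graph). -/
def IsClusterSet (G : SimpleGraph V) (T : Set V) : Prop :=
  ∀ ⦃a b c⦄, a ∈ T → b ∈ T → c ∈ T → G.Adj a b → G.Adj b c → a ≠ c → G.Adj a c

lemma IsClusterSet.adj_or_eq_trans {T : Set V} (hT : G.IsClusterSet T) {a b c : V} (ha : a ∈ T)
    (hb : b ∈ T) (hc : c ∈ T) (hab : G.Adj a b ∨ a = b) (hbc : G.Adj b c ∨ b = c) :
    G.Adj a c ∨ a = c := by
  rcases hab with hab | rfl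
  · rcases hbc with hbc | rfl
    · by_cases hac : a = c
      · exact Or.inr hac
      · exact Or.inl (hT ha hb hc hab hbc hac)
    · exact Or.inl hab
  · exact hbc

section Finite

variable [Finite V]

lemma IsClusterSet.ncard_le_rho {T : Set V} (hT : G.IsClusterSet T) : T.ncard ≤ G.rho := by
  classical
  have := Fintype.ofFinite V
  -- `N t` is the clique of `G[T]` containing `t`; these cliques form the required family.
  let N : V → Finset V := fun t => {u ∈ T.toFinset | G.Adj u t ∨ u = t}
  have mem_N {t u : V} : u ∈ N t ↔ u ∈ T ∧ (G.Adj u t ∨ u = t) := by simp [N]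
  have N_eq {t u : V} (ht : t ∈ T) (hu : u ∈ N t) : N u = N t := by
    obtain ⟨hu, hut⟩ := mem_N.mp hu
    ext x
    simp only [mem_N, and_congr_right_iff]
    exact fun hx => ⟨fun hxu => hT.adj_or_eq_trans hx hu ht hxu hut,
      fun hxt => hT.adj_or_eq_trans hx ht hu hxt (hut.imp G.adj_symm Eq.symm)⟩
  refine le_csSup ⟨Nat.card V, ?_⟩ ⟨T.toFinset.image N, ?_, ?_, ?_⟩
  · rintro _ ⟨𝒬, -, -, rfl⟩
    exact Set.ncard_le_card _
  · simp only [Finset.mem_image, Set.mem_toFinset]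
    rintro _ ⟨t, ht, rfl⟩ u hu u' hu' huu'
    obtain ⟨hu, hut⟩ := mem_N.mp hu
    obtain ⟨hu', hu't⟩ := mem_N.mp hu'
    exact (hT.adj_or_eq_trans hu ht hu' hut (hu't.imp G.adj_symm Eq.symm)).resolve_right huu'
  · simp only [Finset.mem_image, Set.mem_toFinset]
    rintro _ ⟨t, ht, rfl⟩ _ ⟨s, hs, rfl⟩ hne u hu u' hu'
    rw [two_le_edist_iff, ← not_or, or_comm]
    intro huu'
    have hu'u : u' ∈ N u := mem_N.mpr ⟨(mem_N.mp hu').1, huu'.imp G.adj_symm Eq.symm⟩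
    exact hne ((N_eq ht hu).symm.trans ((N_eq (mem_N.mp hu).1 hu'u).symm.trans (N_eq hs hu')))
  · congr 1
    ext x
    simp only [Finset.mem_image, Set.mem_toFinset, Set.mem_iUnion, Finset.mem_coe, exists_prop]
    exact ⟨fun hx => ⟨N x, ⟨x, hx, rfl⟩, mem_N.mpr ⟨hx, Or.inr rfl⟩⟩,
      fun ⟨_, ⟨t, _, hQ⟩, hx⟩ => (mem_N.mp (hQ ▸ hx)).1⟩

lemma one_le_rho [Nonempty V] : 1 ≤ G.rho := by
  have hT : G.IsClusterSet {Classical.arbitrary V} := by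
    rintro a b c rfl - rfl - - hac
    exact absurd rfl hac
  simpa using hT.ncard_le_rho

lemma exists_isClusterSet_ncard_eq_rho : ∃ T : Set V, G.IsClusterSet T ∧ T.ncard = G.rho := by
  obtain ⟨𝒬, hclique, hindep, hcard⟩ : G.rho ∈ _ := Nat.sSup_mem ⟨0, ∅, by simp, by simp, by simp⟩
    ⟨Nat.card V, by rintro _ ⟨𝒬, -, -, rfl⟩; exact Set.ncard_le_card _⟩
  refine ⟨⋃ Q ∈ 𝒬, (Q : Set V), ?_, hcard.symm⟩
  have same_clique {Q Q' : Finset V} (hQ : Q ∈ 𝒬) (hQ' : Q' ∈ 𝒬) {a b : V} (ha : a ∈ Q)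
      (hb : b ∈ Q') (hab : G.Adj a b) : Q = Q' := by
    by_contra hne
    exact (two_le_edist_iff.mp (hindep Q hQ Q' hQ' hne a ha b hb)).2 hab
  simp only [IsClusterSet, Set.mem_iUnion, Finset.mem_coe, exists_prop]
  rintro a b c ⟨Qa, hQa, ha⟩ ⟨Qb, hQb, hb⟩ ⟨Qc, hQc, hc⟩ hab hbc hac
  obtain rfl := same_clique hQa hQb ha hb hab
  obtain rfl := same_clique hQa hQc hb hc hbc
  exact hclique Qa hQa ha hc hac

end Finite

end SimpleGraph

section Corona

open SimpleGraph Sum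

variable {α β : Type*} {G : SimpleGraph α} {H : SimpleGraph β}

@[simp] lemma corona_adj_inl_inr {a a' : α} {b : β} :
    (corona G H).Adj (inl a) (inr (a', b)) ↔ a = a' := Iff.rfl

@[simp] lemma corona_adj_inr_inl {a a' : α} {b : β} :
    (corona G H).Adj (inr (a, b)) (inl a') ↔ a = a' := Iff.rfl

@[simp] lemma corona_adj_inr_inr {a a' : α} {b b' : β} :
    (corona G H).Adj (inr (a, b)) (inr (a', b')) ↔ a = a' ∧ H.Adj b b' := Iff.rfl

def coronaInl (G : SimpleGraph α) (H : SimpleGraph β) : G →g corona G H := ⟨inl, id⟩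

lemma corona_connected (hG : G.Connected) : (corona G H).Connected := by
  have := hG.nonempty
  have reach_inl : ∀ x, ∃ a, (corona G H).Reachable x (inl a) := by
    rintro (a | ⟨a, b⟩)
    exacts [⟨a, .rfl⟩, ⟨a, Adj.reachable rfl⟩]
  refine ⟨fun x y => ?_⟩
  obtain ⟨a, hxa⟩ := reach_inl x
  obtain ⟨a', hya'⟩ := reach_inl y
  exact hxa.trans (((hG a a').map (coronaInl G H)).trans hya'.symm)

lemma corona_dist_inl_inl_le (hG : G.Connected) (a a' : α) :
    (corona G H).dist (inl a) (inl a') ≤ G.dist a a' :=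
  (hG a a').dist_map_le (coronaInl G H)

open Classical in
/-- The left side is the distance from `x` to the copy of `H` at `a₀` (and `0` on that copy);
it changes by at most one along an edge. -/
lemma le_corona_dist_inr (hG : G.Connected) (x : α ⊕ α × β) (a₀ : α) (b₀ : β) :
    x.elim (fun a => G.dist a a₀ + 1) (fun p => if p.1 = a₀ then 0 else G.dist p.1 a₀ + 2) ≤
      (corona G H).dist x (inr (a₀, b₀)) := by
  let Φ : α ⊕ α × β → ℕ :=
    Sum.elim (fun a => G.dist a a₀ + 1) (fun p => if p.1 = a₀ then 0 else G.dist p.1 a₀ + 2)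
  suffices hΦ : ∀ ⦃x y⦄, (corona G H).Adj x y → Φ x ≤ Φ y + 1 by
    simpa [Φ] using ((corona_connected hG).preconnected x (inr (a₀, b₀))).le_add_dist_of_adj_le hΦ
  have dist_le_of_adj {a a' : α} (h : G.Adj a a') : G.dist a a₀ ≤ G.dist a' a₀ + 1 := by
    have := hG.dist_triangle (u := a) (v := a') (w := a₀)
    rw [dist_eq_one_iff_adj.mpr h] at this
    omega
  rintro (a | ⟨a, b⟩) (a' | ⟨a', b'⟩) h
  · simpa [Φ] using dist_le_of_adj h
  · obtain rfl : a = a' := h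
    by_cases ha : a = a₀ <;> simp [Φ, ha]
  · obtain rfl : a = a' := h
    by_cases ha : a = a₀ <;> simp [Φ, ha]
  · obtain rfl : a = a' := h.1
    simp [Φ]

lemma corona_dist_inl_inr (hG : G.Connected) (a a₀ : α) (b₀ : β) :
    (corona G H).dist (inl a) (inr (a₀, b₀)) = G.dist a a₀ + 1 := by
  refine le_antisymm ?_ (by simpa using le_corona_dist_inr hG (inl a) a₀ b₀)
  calc (corona G H).dist (inl a) (inr (a₀, b₀))
      ≤ (corona G H).dist (inl a) (inl a₀) + (corona G H).dist (inl a₀) (inr (a₀, b₀)) :=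
        (corona_connected hG).dist_triangle
    _ ≤ G.dist a a₀ + 1 := by
        rw [dist_eq_one_iff_adj.mpr (corona_adj_inl_inr.mpr rfl)]
        exact Nat.add_le_add_right (corona_dist_inl_inl_le hG a a₀) 1

lemma corona_dist_inr_inr_of_ne (hG : G.Connected) {a a₀ : α} (ha : a ≠ a₀) (b b₀ : β) :
    (corona G H).dist (inr (a, b)) (inr (a₀, b₀)) = G.dist a a₀ + 2 := by
  refine le_antisymm ?_ (by simpa [ha] using le_corona_dist_inr hG (inr (a, b)) a₀ b₀)
  calc (corona G H).dist (inr (a, b)) (inr (a₀, b₀))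
      ≤ (corona G H).dist (inr (a, b)) (inl a) + (corona G H).dist (inl a) (inr (a₀, b₀)) :=
        (corona_connected hG).dist_triangle
    _ = G.dist a a₀ + 2 := by
        rw [dist_eq_one_iff_adj.mpr (corona_adj_inr_inl.mpr rfl), corona_dist_inl_inr hG]
        omega

lemma corona_dist_inr_inr_of_not_adj (hG : G.Connected) (a : α) {b b' : β} (hb : b ≠ b')
    (hadj : ¬H.Adj b b') : (corona G H).dist (inr (a, b)) (inr (a, b')) = 2 := by
  refine le_antisymm ?_ ((corona_connected hG).one_lt_dist_of_ne_of_not_adj (by simpa) (by simpa))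
  calc (corona G H).dist (inr (a, b)) (inr (a, b'))
      ≤ (corona G H).dist (inr (a, b)) (inl a) + (corona G H).dist (inl a) (inr (a, b')) :=
        (corona_connected hG).dist_triangle
    _ = 2 := by
        rw [dist_eq_one_iff_adj.mpr (corona_adj_inr_inl.mpr rfl),
          dist_eq_one_iff_adj.mpr (corona_adj_inl_inr.mpr rfl)]

end Corona

section CoronaGP

open SimpleGraph Sum

variable {α β : Type*} {G : SimpleGraph α} {H : SimpleGraph β} {S : Set (α ⊕ α × β)}

lemma SimpleGraph.IsGPSet.isClusterSet_corona_copy (hG : G.Connected)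
    (hS : (corona G H).IsGPSet S) (v : α) : H.IsClusterSet {b | inr (v, b) ∈ S} := by
  intro b u w hb hu hw hbu huw hbw
  by_contra hbw'
  have := (corona_connected hG).isGPSet_iff.mp hS hb hw hu (by simpa) (by simpa using hbu.ne)
    (by simpa using huw.ne')
  rw [corona_dist_inr_inr_of_not_adj hG v hbw hbw', dist_eq_one_iff_adj.mpr (by simpa),
    dist_eq_one_iff_adj.mpr (by simpa)] at this
  omega

/-- A geodesic from outside the copy of `H` at `v` into that copy passes through `v`. -/
lemma SimpleGraph.IsGPSet.subset_insert_corona_copy (hG : G.Connected)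
    (hS : (corona G H).IsGPSet S) {v : α} {b : β} (hv : inl v ∈ S) (hb : inr (v, b) ∈ S) :
    S ⊆ insert (inl v) ((fun c => inr (v, c)) '' {c | inr (v, c) ∈ S}) := by
  have hgp := (corona_connected hG).isGPSet_iff.mp hS
  have hvb : (corona G H).dist (inl v) (inr (v, b)) = 1 := dist_eq_one_iff_adj.mpr rfl
  rintro (w | ⟨w, c⟩) hx
  · by_cases hw : w = v
    · exact Or.inl (hw ▸ rfl)
    have := hgp hx hb hv (by simp) (by simpa) (by simp)
    rw [corona_dist_inl_inr hG, hvb] at this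
    have := corona_dist_inl_inl_le (H := H) hG w v
    omega
  · by_cases hw : w = v
    · exact Or.inr ⟨c, hw ▸ hx, hw ▸ rfl⟩
    have := hgp hx hb hv (by simp [hw]) (by simp) (by simp)
    rw [corona_dist_inr_inr_of_ne hG hw, hvb, dist_comm (u := inr (w, c)), corona_dist_inl_inr hG,
      G.dist_comm] at this
    omega

lemma isGPSet_corona_of_isClusterSet (hG : G.Connected) {U : Set β} (hU : H.IsClusterSet U) :
    (corona G H).IsGPSet (inr '' (Set.univ ×ˢ U)) := by
  have hC := corona_connected (H := H) hG
  rw [hC.isGPSet_iff]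
  rintro _ _ _ ⟨⟨a₁, b₁⟩, ⟨-, hb₁⟩, rfl⟩ ⟨⟨a₂, b₂⟩, ⟨-, hb₂⟩, rfl⟩ ⟨⟨a₃, b₃⟩, ⟨-, hb₃⟩, rfl⟩
    h12 h13 h23
  have d13 := hC.pos_dist_of_ne h13
  have d32 := hC.pos_dist_of_ne h23.symm
  by_cases ha : a₁ = a₂
  · subst ha
    have hb : b₁ ≠ b₂ := by rintro rfl; exact h12 rfl
    by_cases hadj : H.Adj b₁ b₂
    · rw [dist_eq_one_iff_adj.mpr (by simpa)]
      omega
    rw [corona_dist_inr_inr_of_not_adj hG a₁ hb hadj]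
    by_contra! hle
    have e13 : (corona G H).dist (inr (a₁, b₁)) (inr (a₃, b₃)) = 1 := by omega
    have e32 : (corona G H).dist (inr (a₃, b₃)) (inr (a₁, b₂)) = 1 := by omega
    obtain ⟨rfl, hb₁₃⟩ := corona_adj_inr_inr.mp (dist_eq_one_iff_adj.mp e13)
    obtain ⟨-, hb₃₂⟩ := corona_adj_inr_inr.mp (dist_eq_one_iff_adj.mp e32)
    exact hadj (hU hb₁ hb₃ hb₂ hb₁₃ hb₃₂ hb)
  rw [corona_dist_inr_inr_of_ne hG ha]
  by_cases h31 : a₃ = a₁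
  · subst h31
    rw [corona_dist_inr_inr_of_ne hG ha]
    omega
  by_cases h32 : a₃ = a₂
  · subst h32
    rw [corona_dist_inr_inr_of_ne hG ha]
    omega
  rw [corona_dist_inr_inr_of_ne hG (Ne.symm h31), corona_dist_inr_inr_of_ne hG h32]
  have := hG.dist_triangle (u := a₁) (v := a₃) (w := a₂)
  omega

variable [Finite β]

lemma SimpleGraph.IsGPSet.ncard_le_rho_add_one (hG : G.Connected) (hS : (corona G H).IsGPSet S)
    {v : α} {b : β} (hv : inl v ∈ S) (hb : inr (v, b) ∈ S) : S.ncard ≤ H.rho + 1 :=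
  calc S.ncard ≤ (insert (inl v) ((fun c => inr (v, c)) '' {c | inr (v, c) ∈ S})).ncard :=
        Set.ncard_le_ncard (hS.subset_insert_corona_copy hG hv hb)
    _ ≤ ((fun c => inr (v, c)) '' {c | inr (v, c) ∈ S}).ncard + 1 := Set.ncard_insert_le _ _
    _ ≤ H.rho + 1 := by
        grw [Set.ncard_image_le, (hS.isClusterSet_corona_copy hG v).ncard_le_rho]

lemma SimpleGraph.IsGPSet.ncard_le_card_mul_rho [Fintype α] [Nonempty β] (hG : G.Connected)
    (hS : (corona G H).IsGPSet S) (hsep : ∀ v b, inl v ∈ S → inr (v, b) ∉ S) :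
    S.ncard ≤ Fintype.card α * H.rho := by
  let fiber (v : α) : Set (α ⊕ α × β) := {x ∈ S | x.elim id Prod.fst = v}
  have fiber_ncard_le (v : α) : (fiber v).ncard ≤ H.rho := by
    by_cases hv : inl v ∈ S
    · have : fiber v ⊆ {inl v} := by
        rintro (w | ⟨w, c⟩) ⟨hx, rfl⟩
        exacts [rfl, absurd hx (hsep w c hv)]
      grw [Set.ncard_le_ncard this, Set.ncard_singleton, one_le_rho (G := H)]
    · have : fiber v ⊆ (fun c => inr (v, c)) '' {c | inr (v, c) ∈ S} := by
        rintro (w | ⟨w, c⟩) ⟨hx, rfl⟩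
        exacts [absurd hx hv, ⟨c, hx, rfl⟩]
      grw [Set.ncard_le_ncard this, Set.ncard_image_le,
        (hS.isClusterSet_corona_copy hG v).ncard_le_rho]
  calc S.ncard ≤ (⋃ v, fiber v).ncard :=
        Set.ncard_le_ncard fun x hx => Set.mem_iUnion.mpr ⟨_, hx, rfl⟩
    _ ≤ ∑ v, (fiber v).ncard := Set.ncard_iUnion_le_of_fintype fiber
    _ ≤ ∑ _v : α, H.rho := Finset.sum_le_sum fun v _ => fiber_ncard_le v
    _ = Fintype.card α * H.rho := by simp

end CoronaGP

/-- If `G` is a finite connected graph with at least two vertices and `H` is a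
finite graph with at least one vertex, then `gp(G ∘ H) = n(G) · ρ(H)`. -/
theorem gpNumber_corona {α β : Type*} [Fintype α] [Fintype β] [Nonempty β]
    (G : SimpleGraph α) (H : SimpleGraph β) (hG : G.Connected)
    (hcard : 2 ≤ Fintype.card α) :
    (corona G H).gpNumber = Fintype.card α * H.rho := by
  refine le_antisymm (SimpleGraph.gpNumber_le fun S hS => ?_) ?_
  · by_cases h : ∃ v b, Sum.inl v ∈ S ∧ Sum.inr (v, b) ∈ S
    · obtain ⟨v, b, hv, hb⟩ := h
      have hρ : 1 ≤ H.rho := SimpleGraph.one_le_rho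
      calc S.ncard ≤ H.rho + 1 := hS.ncard_le_rho_add_one hG hv hb
        _ ≤ 2 * H.rho := by omega
        _ ≤ Fintype.card α * H.rho := Nat.mul_le_mul_right _ hcard
    · push Not at h
      exact hS.ncard_le_card_mul_rho hG h
  · obtain ⟨U, hU, hUcard⟩ := SimpleGraph.exists_isClusterSet_ncard_eq_rho (G := H)
    calc Fintype.card α * H.rho = (Sum.inr '' (Set.univ ×ˢ U) : Set (α ⊕ α × β)).ncard := by
          rw [Set.ncard_image_of_injective _ Sum.inr_injective, Set.ncard_prod, Set.ncard_univ,
            Nat.card_eq_fintype_card, hUcard]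
      _ ≤ (corona G H).gpNumber := (isGPSet_corona_of_isClusterSet hG hU).ncard_le_gpNumber
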